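/- For the dispersion function F(ω) = ω²(1 + Σ_{j=1}^N ε_j/(1 − ω t_j)) + ω_s², with distinct positive stopping times t_1 < t_2 < ··· < t_N, positive ε_j, and ω_s > 0: F is positive on (0, min_j t_j^{-1}); F(ω) → ∓∞ as ω → t_j^{-1}± (one-sided limits change sign across each pole); and F(ω) → +∞ as ω → +∞. Consequently the associated polynomial P̃(ω) = ω²(∏_j(1 − ω t_j) + Σ_j ε_j ∏_{p≠j}(1 − ω t_p)) + ω_s² ∏_j(1 − ω t_j) has at least N distinct real positive roots, one in each interval (t_{j+1}^{-1}, t_j^{-1}) for j = 1,…,N−1 and one in (t_1^{-1}, ∞). -/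

import Mathlib

/-!
Off the poles `P = F · ∏ⱼ (1 - ω tⱼ)`. At the pole `tⱼ⁻¹` only the `j`-th summand of `P` survives,
`P(tⱼ⁻¹) = tⱼ⁻² εⱼ ∏_{p ≠ j} (1 - tₚ / tⱼ)`, whose sign is `(-1) ^ #{p | tⱼ < tₚ}`: `P` changes sign
between consecutive poles. Beyond the last pole all factors `1 - ω tⱼ` are negative while `F → +∞`,
so there `P` has the sign `(-1) ^ N`, opposite to its sign at `t₁⁻¹`. The intermediate value
theorem gives the roots. Near `tⱼ⁻¹`, `F` is a function continuous at `tⱼ⁻¹` plus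
`ω² εⱼ / (1 - ω tⱼ)`, which gives the one-sided limits.
-/

open Finset Filter Topology

theorem exists_mem_Ioo_eq_zero_of_mul_neg {f : ℝ → ℝ} {a b : ℝ} (hab : a ≤ b)
    (hf : ContinuousOn f (Set.Icc a b)) (hfab : f a * f b < 0) :
    ∃ x ∈ Set.Ioo a b, f x = 0 := by
  rcases mul_neg_iff.1 hfab with ⟨ha, hb⟩ | ⟨ha, hb⟩
  · exact intermediate_value_Ioo' hab hf ⟨hb, ha⟩
  · exact intermediate_value_Ioo hab hf ⟨ha, hb⟩

theorem mul_neg_of_neg_one_pow_mul_pos {x y : ℝ} {n : ℕ} (hx : 0 < (-1) ^ n * x)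
    (hy : 0 < (-1) ^ (n + 1) * y) : x * y < 0 := by
  rw [pow_succ, mul_neg_one, neg_mul, neg_pos] at hy
  calc x * y = ((-1) ^ n * x) * ((-1) ^ n * y) := by
        rw [mul_mul_mul_comm, ← pow_add, Even.neg_one_pow ⟨n, rfl⟩, one_mul]
    _ < 0 := mul_neg_of_pos_of_neg hx hy

theorem neg_one_pow_card_mul_prod_pos {ι : Type*} {s : Finset ι} {f : ι → ℝ}
    (hf : ∀ i ∈ s, f i < 0) : 0 < (-1) ^ #s * ∏ i ∈ s, f i := by
  rw [← prod_neg]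
  exact prod_pos fun i hi => neg_pos.2 (hf i hi)

theorem StrictMono.card_filter_apply_lt {N : ℕ} {t : Fin N → ℝ} (ht : StrictMono t) (j : Fin N) :
    #{p | t j < t p} = N - 1 - j := by
  simp only [ht.lt_iff_lt, filter_lt_eq_Ioi, Fin.card_Ioi]

section OneSubMul

variable {t ω : ℝ}

theorem one_sub_mul_pos_iff (ht : 0 < t) : 0 < 1 - ω * t ↔ ω < t⁻¹ := by
  rw [sub_pos, ← one_mul t⁻¹, lt_mul_inv_iff₀ ht]

theorem one_sub_mul_neg_iff (ht : 0 < t) : 1 - ω * t < 0 ↔ t⁻¹ < ω := by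
  rw [sub_neg, inv_lt_iff_one_lt_mul₀ ht]

theorem tendsto_one_sub_mul_nhds_inv (ht : t ≠ 0) :
    Tendsto (fun ω => 1 - ω * t) (𝓝 t⁻¹) (𝓝 0) := by
  simpa [ht] using (by fun_prop : Continuous fun ω : ℝ => 1 - ω * t).tendsto t⁻¹

theorem tendsto_one_sub_mul_nhdsLT_inv (ht : 0 < t) :
    Tendsto (fun ω => 1 - ω * t) (𝓝[<] t⁻¹) (𝓝[>] 0) :=
  tendsto_nhdsWithin_of_tendsto_nhds_of_eventually_within _
    ((tendsto_one_sub_mul_nhds_inv ht.ne').mono_left nhdsWithin_le_nhds)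
    (by filter_upwards [self_mem_nhdsWithin] with ω hω using (one_sub_mul_pos_iff ht).2 hω)

theorem tendsto_one_sub_mul_nhdsGT_inv (ht : 0 < t) :
    Tendsto (fun ω => 1 - ω * t) (𝓝[>] t⁻¹) (𝓝[<] 0) :=
  tendsto_nhdsWithin_of_tendsto_nhds_of_eventually_within _
    ((tendsto_one_sub_mul_nhds_inv ht.ne').mono_left nhdsWithin_le_nhds)
    (by filter_upwards [self_mem_nhdsWithin] with ω hω using (one_sub_mul_neg_iff ht).2 hω)

end OneSubMul

section Dispersion

variable {ι : Type*} [Fintype ι] (t ε : ι → ℝ) (ωs : ℝ)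

noncomputable def dispersionFun (ω : ℝ) : ℝ :=
  ω ^ 2 * (1 + ∑ j, ε j / (1 - ω * t j)) + ωs ^ 2

def dispersionPoly [DecidableEq ι] (ω : ℝ) : ℝ :=
  ω ^ 2 * (∏ j, (1 - ω * t j) + ∑ j, ε j * ∏ p ∈ univ.erase j, (1 - ω * t p)) +
    ωs ^ 2 * ∏ j, (1 - ω * t j)

theorem continuous_dispersionPoly [DecidableEq ι] : Continuous (dispersionPoly t ε ωs) := by
  unfold dispersionPoly
  fun_prop

variable {t ε}

theorem dispersionFun_pos {ω : ℝ} (hε : ∀ j, 0 < ε j) (hω : 0 < ω)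
    (ht : ∀ j, 0 < 1 - ω * t j) : 0 < dispersionFun t ε ωs ω := by
  have hsum : 0 ≤ ∑ j, ε j / (1 - ω * t j) :=
    sum_nonneg fun j _ => (div_pos (hε j) (ht j)).le
  unfold dispersionFun
  positivity

theorem tendsto_dispersionFun_atTop (ht : ∀ j, 0 < t j) :
    Tendsto (dispersionFun t ε ωs) atTop atTop := by
  have hden : ∀ j, Tendsto (fun ω => 1 - ω * t j) atTop atBot := fun j => by
    simpa only [sub_eq_add_neg, Function.comp_def, id] using
      tendsto_atBot_add_const_left _ 1
        (tendsto_neg_atTop_atBot.comp (tendsto_id.atTop_mul_const (ht j)))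
  have hsum : Tendsto (fun ω => 1 + ∑ j, ε j / (1 - ω * t j)) atTop (𝓝 1) := by
    simpa using tendsto_const_nhds.add
      (tendsto_finsetSum univ fun j _ => tendsto_const_nhds.div_atBot (hden j))
  exact tendsto_atTop_add_const_right _ _ <|
    (tendsto_pow_atTop two_ne_zero).atTop_mul_pos one_pos hsum

theorem continuousAt_dispersionFun_sub_pole (ht : Function.Injective t) {j : ι} (htj : t j ≠ 0) :
    ContinuousAt (fun ω => dispersionFun t ε ωs ω - ω ^ 2 * ε j * (1 - ω * t j)⁻¹) (t j)⁻¹ := by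
  classical
  have hregular : (fun ω => dispersionFun t ε ωs ω - ω ^ 2 * ε j * (1 - ω * t j)⁻¹) =
      fun ω => ω ^ 2 * (1 + ∑ k ∈ univ.erase j, ε k / (1 - ω * t k)) + ωs ^ 2 := by
    funext ω
    simp only [dispersionFun, ← add_sum_erase _ _ (mem_univ j), div_eq_mul_inv]
    ring
  have hden : ∀ k ∈ univ.erase j, 1 - (t j)⁻¹ * t k ≠ 0 := fun k hk =>
    sub_ne_zero.2 fun h => ne_of_mem_erase hk (ht ((inv_mul_eq_one₀ htj).1 h.symm).symm)
  rw [hregular]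
  have hsum : ContinuousAt (fun ω => ∑ k ∈ univ.erase j, ε k / (1 - ω * t k)) (t j)⁻¹ :=
    tendsto_finsetSum _ fun k hk => continuousAt_const.div (by fun_prop) (hden k hk)
  fun_prop

theorem tendsto_dispersionFun_nhdsLT_inv (ht : Function.Injective t) {j : ι} (htj : 0 < t j)
    (hεj : 0 < ε j) : Tendsto (dispersionFun t ε ωs) (𝓝[<] (t j)⁻¹) atTop := by
  have hpole : Tendsto (fun ω => ω ^ 2 * ε j * (1 - ω * t j)⁻¹) (𝓝[<] (t j)⁻¹) atTop :=
    Tendsto.pos_mul_atTop (by positivity : 0 < (t j)⁻¹ ^ 2 * ε j)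
      (((by fun_prop : Continuous fun ω : ℝ => ω ^ 2 * ε j).tendsto _).mono_left
        nhdsWithin_le_nhds)
      (tendsto_one_sub_mul_nhdsLT_inv htj).inv_tendsto_nhdsGT_zero
  exact (((continuousAt_dispersionFun_sub_pole ωs ht htj.ne').tendsto.mono_left
    nhdsWithin_le_nhds).add_atTop hpole).congr fun ω => sub_add_cancel _ _

theorem tendsto_dispersionFun_nhdsGT_inv (ht : Function.Injective t) {j : ι} (htj : 0 < t j)
    (hεj : 0 < ε j) : Tendsto (dispersionFun t ε ωs) (𝓝[>] (t j)⁻¹) atBot := by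
  have hpole : Tendsto (fun ω => ω ^ 2 * ε j * (1 - ω * t j)⁻¹) (𝓝[>] (t j)⁻¹) atBot :=
    Tendsto.pos_mul_atBot (by positivity : 0 < (t j)⁻¹ ^ 2 * ε j)
      (((by fun_prop : Continuous fun ω : ℝ => ω ^ 2 * ε j).tendsto _).mono_left
        nhdsWithin_le_nhds)
      (tendsto_one_sub_mul_nhdsGT_inv htj).inv_tendsto_nhdsLT_zero
  exact (((continuousAt_dispersionFun_sub_pole ωs ht htj.ne').tendsto.mono_left
    nhdsWithin_le_nhds).add_atBot hpole).congr fun ω => sub_add_cancel _ _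

variable [DecidableEq ι]

theorem dispersionPoly_eq_dispersionFun_mul_prod {ω : ℝ} (hω : ∀ j, 1 - ω * t j ≠ 0) :
    dispersionPoly t ε ωs ω = dispersionFun t ε ωs ω * ∏ j, (1 - ω * t j) := by
  have hsum : (∑ j, ε j / (1 - ω * t j)) * ∏ p, (1 - ω * t p) =
      ∑ j, ε j * ∏ p ∈ univ.erase j, (1 - ω * t p) := by
    rw [sum_mul]
    refine sum_congr rfl fun j _ => ?_
    rw [← mul_prod_erase univ _ (mem_univ j)]
    field_simp [hω j]
  rw [dispersionPoly, dispersionFun, ← hsum]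
  ring

theorem dispersionPoly_inv_apply {j : ι} (htj : t j ≠ 0) :
    dispersionPoly t ε ωs (t j)⁻¹ =
      (t j)⁻¹ ^ 2 * ε j * ∏ p ∈ univ.erase j, (1 - (t j)⁻¹ * t p) := by
  have hj : 1 - (t j)⁻¹ * t j = 0 := by rw [inv_mul_cancel₀ htj, sub_self]
  have hprod : ∏ p, (1 - (t j)⁻¹ * t p) = 0 := prod_eq_zero (mem_univ j) hj
  have hsum : ∑ k, ε k * ∏ p ∈ univ.erase k, (1 - (t j)⁻¹ * t p) =
      ε j * ∏ p ∈ univ.erase j, (1 - (t j)⁻¹ * t p) :=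
    sum_eq_single j (fun k _ hkj => by rw [prod_eq_zero (mem_erase.2 ⟨hkj.symm, mem_univ j⟩) hj,
      mul_zero]) (fun h => absurd (mem_univ j) h)
  rw [dispersionPoly, hprod, hsum]
  ring

theorem neg_one_pow_mul_dispersionPoly_inv_pos (ht : ∀ p, 0 < t p) (hinj : Function.Injective t)
    {j : ι} (hεj : 0 < ε j) :
    0 < (-1) ^ #{p | t j < t p} * dispersionPoly t ε ωs (t j)⁻¹ := by
  have hfilter : {p ∈ univ.erase j | t j < t p} = ({p | t j < t p} : Finset ι) := by
    rw [filter_erase, erase_eq_of_notMem (by simp)]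
  have hneg : ∀ p ∈ ({p | t j < t p} : Finset ι), 1 - (t j)⁻¹ * t p < 0 := fun p hp =>
    sub_neg.2 ((one_lt_inv_mul₀ (ht j)).2 (mem_filter.1 hp).2)
  have hpos : ∀ p ∈ {p ∈ univ.erase j | ¬t j < t p}, 0 < 1 - (t j)⁻¹ * t p := fun p hp => by
    obtain ⟨hpj, hle⟩ := mem_filter.1 hp
    exact sub_pos.2 ((inv_mul_lt_one₀ (ht j)).2
      ((not_lt.1 hle).lt_of_ne (hinj.ne (ne_of_mem_erase hpj))))
  rw [dispersionPoly_inv_apply ωs (ht j).ne', ← prod_filter_mul_prod_filter_not _ (t j < t ·),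
    hfilter, show ∀ a b c d : ℝ, a * (b * (c * d)) = b * (a * c) * d by intros; ring]
  exact mul_pos (mul_pos (mul_pos (pow_pos (inv_pos.2 (ht j)) 2) hεj)
    (neg_one_pow_card_mul_prod_pos hneg)) (prod_pos hpos)

theorem neg_one_pow_card_mul_dispersionPoly_pos (ht : ∀ j, 0 < t j) {ω : ℝ}
    (hω : ∀ j, (t j)⁻¹ < ω) (hF : 0 < dispersionFun t ε ωs ω) :
    0 < (-1) ^ Fintype.card ι * dispersionPoly t ε ωs ω := by
  have hneg : ∀ j ∈ univ, 1 - ω * t j < 0 := fun j _ => (one_sub_mul_neg_iff (ht j)).2 (hω j)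
  rw [dispersionPoly_eq_dispersionFun_mul_prod ωs fun j => (hneg j (mem_univ j)).ne,
    mul_left_comm, ← card_univ]
  exact mul_pos hF (neg_one_pow_card_mul_prod_pos hneg)

end Dispersion

theorem dispersion_function_sign_changes_and_roots_general (N : ℕ) (hN : 0 < N)
    (t ε : Fin N → ℝ) (ht : ∀ j, 0 < t j) (htmono : StrictMono t)
    (hε : ∀ j, 0 < ε j) (ωs : ℝ)
    (F P : ℝ → ℝ)
    (hF : ∀ ω, F ω = ω ^ 2 * (1 + ∑ j : Fin N, ε j / (1 - ω * t j)) + ωs ^ 2)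
    (hP : ∀ ω, P ω = ω ^ 2 * (∏ j : Fin N, (1 - ω * t j) +
        ∑ j : Fin N, ε j * ∏ p ∈ Finset.univ.erase j, (1 - ω * t p)) +
      ωs ^ 2 * ∏ j : Fin N, (1 - ω * t j)) :
    -- F is positive on (0, min_j t_j⁻¹)
    (∀ ω, 0 < ω → (∀ j, ω < (t j)⁻¹) → 0 < F ω) ∧
    -- one-sided limits at each pole: F → +∞ from the left, F → -∞ from the right
    (∀ j, Tendsto F (𝓝[<] (t j)⁻¹) atTop) ∧
    (∀ j, Tendsto F (𝓝[>] (t j)⁻¹) atBot) ∧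
    -- F → +∞ at +∞
    Tendsto F atTop atTop ∧
    -- one real positive root of P̃ in each interval between consecutive poles
    (∀ j : Fin N, ∀ hj : j.val + 1 < N,
      ∃ ω, (t ⟨j.val + 1, hj⟩)⁻¹ < ω ∧ ω < (t j)⁻¹ ∧ P ω = 0) ∧
    -- one real positive root beyond the largest pole (t_1)⁻¹
    (∃ ω, (t ⟨0, hN⟩)⁻¹ < ω ∧ P ω = 0) := by
  obtain rfl : F = dispersionFun t ε ωs := funext hF
  obtain rfl : P = dispersionPoly t ε ωs := funext hP
  have hinj := htmono.injective
  have hPcont := continuous_dispersionPoly t ε ωs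
  have hpole (j : Fin N) : 0 < (-1) ^ (N - 1 - j) * dispersionPoly t ε ωs (t j)⁻¹ := by
    simpa only [htmono.card_filter_apply_lt] using
      neg_one_pow_mul_dispersionPoly_inv_pos ωs ht hinj (hε j)
  refine ⟨fun ω hω hlt =>
      dispersionFun_pos ωs hε hω fun j => (one_sub_mul_pos_iff (ht j)).2 (hlt j),
    fun j => tendsto_dispersionFun_nhdsLT_inv ωs hinj (ht j) (hε j),
    fun j => tendsto_dispersionFun_nhdsGT_inv ωs hinj (ht j) (hε j),
    tendsto_dispersionFun_atTop ωs ht, fun j hj => ?_, ?_⟩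
  · have hlt : (t ⟨j + 1, hj⟩)⁻¹ < (t j)⁻¹ :=
      (inv_lt_inv₀ (ht _) (ht _)).2 (htmono (Fin.mk_lt_mk.2 (Nat.lt_add_one j)))
    obtain ⟨ω, hω, hPω⟩ := exists_mem_Ioo_eq_zero_of_mul_neg hlt.le hPcont.continuousOn
      (mul_neg_of_neg_one_pow_mul_pos (n := N - 1 - (j + 1)) (hpole ⟨j + 1, hj⟩)
        (by simpa [show N - 1 - j = N - 1 - (j + 1) + 1 by omega] using hpole j))
    exact ⟨ω, hω.1, hω.2, hPω⟩
  · obtain ⟨b, hFb, hb⟩ :=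
      ((tendsto_dispersionFun_atTop (ε := ε) ωs ht).eventually_gt_atTop 0).and
        (eventually_gt_atTop (t ⟨0, hN⟩)⁻¹) |>.exists
    have hbpole (j : Fin N) : (t j)⁻¹ < b :=
      ((inv_le_inv₀ (ht _) (ht _)).2 (htmono.monotone (Nat.zero_le j))).trans_lt hb
    obtain ⟨ω, hω, hPω⟩ := exists_mem_Ioo_eq_zero_of_mul_neg hb.le hPcont.continuousOn
      (mul_neg_of_neg_one_pow_mul_pos (n := N - 1)
        (hpole ⟨0, hN⟩) (by simpa [Nat.sub_add_cancel hN] using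
          neg_one_pow_card_mul_dispersionPoly_pos ωs ht hbpole hFb))
    exact ⟨ω, hω.1, hPω⟩

theorem dispersion_function_sign_changes_and_roots (N : ℕ) (hN : 0 < N)
    (t ε : Fin N → ℝ) (ht : ∀ j, 0 < t j) (htmono : StrictMono t)
    (hε : ∀ j, 0 < ε j) (ωs : ℝ) (hωs : 0 < ωs)
    (F P : ℝ → ℝ)
    (hF : ∀ ω, F ω = ω ^ 2 * (1 + ∑ j : Fin N, ε j / (1 - ω * t j)) + ωs ^ 2)
    (hP : ∀ ω, P ω = ω ^ 2 * (∏ j : Fin N, (1 - ω * t j) +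
        ∑ j : Fin N, ε j * ∏ p ∈ Finset.univ.erase j, (1 - ω * t p)) +
      ωs ^ 2 * ∏ j : Fin N, (1 - ω * t j)) :
    -- F is positive on (0, min_j t_j⁻¹)
    (∀ ω, 0 < ω → (∀ j, ω < (t j)⁻¹) → 0 < F ω) ∧
    -- one-sided limits at each pole: F → +∞ from the left, F → -∞ from the right
    (∀ j, Tendsto F (𝓝[<] (t j)⁻¹) atTop) ∧
    (∀ j, Tendsto F (𝓝[>] (t j)⁻¹) atBot) ∧
    -- F → +∞ at +∞
    Tendsto F atTop atTop ∧
    -- one real positive root of P̃ in each interval between consecutive poles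
    (∀ j : Fin N, ∀ hj : j.val + 1 < N,
      ∃ ω, (t ⟨j.val + 1, hj⟩)⁻¹ < ω ∧ ω < (t j)⁻¹ ∧ P ω = 0) ∧
    -- one real positive root beyond the largest pole (t_1)⁻¹
    (∃ ω, (t ⟨0, hN⟩)⁻¹ < ω ∧ P ω = 0) :=
  dispersion_function_sign_changes_and_roots_general N hN t ε ht htmono hε ωs F P hF hP
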